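/- arXiv:1710.10294 — 2 statements merged into one kernel-verified Lean document; each statement's English description precedes it below -/
import Mathlib

section
/- For a POMDP M and memory bound k, the set of MCs induced by M under k-FSCs equals the set of MCs induced by the k-unfolding M_k under 1-FSCs: { M^{σ_A} | A ∈ k-FSC(M) } = { M_k^{σ_A'} | A' ∈ 1-FSC(M_k) }. -/
open scoped BigOperators

attribute [local instance] Classical.propDecidable

/-- A probability distribution on a finite type. -/
structure Distr (X : Type) [Fintype X] : Type where
  prob : X → ℝ
  nonneg : ∀ x, 0 ≤ prob x
  sum_one : ∑ x, prob x = 1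

/-- A partially observable Markov decision process (underlying MDP plus observations). -/
structure POMDP (S Act Z : Type) [Fintype S] [Fintype Act] [Fintype Z] : Type where
  init : S
  P : S → Act → S → ℝ
  O : S → Z

namespace POMDP

variable {S Act Z : Type} [Fintype S] [Fintype Act] [Fintype Z]

/-- An action is enabled in a state if it has a nonzero outgoing transition. -/
def enabled (M : POMDP S Act Z) (s : S) (a : Act) : Prop :=
  ∃ s', M.P s a s' ≠ 0

/-- An action is enabled at an observation if it is enabled at some state with
that observation. -/
def enabledZ (M : POMDP S Act Z) (z : Z) (a : Act) : Prop :=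
  ∃ s, M.O s = z ∧ M.enabled s a

/-- Well-formedness: probabilities nonnegative, enabled actions give distributions,
no deadlocks, and states with equal observations have equal enabled actions. -/
def WellFormed (M : POMDP S Act Z) : Prop :=
  (∀ s a s', 0 ≤ M.P s a s') ∧
  (∀ s a, M.enabled s a → ∑ s', M.P s a s' = 1) ∧
  (∀ s, ∃ a, M.enabled s a) ∧
  (∀ s s' a, M.O s = M.O s' → (M.enabled s a ↔ M.enabled s' a))

noncomputable def enabledSet (M : POMDP S Act Z) (s : S) : Finset Act :=
  Finset.univ.filter (fun a => M.enabled s a)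

/-- A POMDP is binary if every state has at most two enabled actions. -/
def Binary (M : POMDP S Act Z) : Prop := ∀ s, (M.enabledSet s).card ≤ 2

/-- A binary POMDP is simple if at every state with two enabled actions each
enabled action has a Dirac successor distribution. -/
def Simple (M : POMDP S Act Z) : Prop :=
  M.Binary ∧ ∀ s, (M.enabledSet s).card = 2 → ∀ a, M.enabled s a →
    ∃ s', M.P s a s' = 1 ∧ ∀ t, t ≠ s' → M.P s a t = 0

end POMDP

/-- A finite-state controller with `k` memory nodes. -/
structure FSC (Act Z : Type) [Fintype Act] (k : ℕ) : Type where
  init : Fin k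
  γ : Fin k → Z → Distr Act
  δ : Fin k → Z → Act → Distr (Fin k)

/-- Transition matrix of the Markov chain induced by a POMDP and an FSC. -/
noncomputable def POMDP.inducedMC {S Act Z : Type} [Fintype S] [Fintype Act] [Fintype Z]
    (M : POMDP S Act Z) {k : ℕ} (A : FSC Act Z k) :
    (S × Fin k) → (S × Fin k) → ℝ :=
  fun p q =>
    ∑ a, M.P p.1 a q.1 * (A.γ p.2 (M.O p.1)).prob a * (A.δ p.2 (M.O p.1) a).prob q.2

/-- A parametric Markov chain: transitions are multivariate polynomials over
the parameters `V`. -/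
structure PMC (St V : Type) [Fintype St] : Type where
  init : St
  P : St → St → MvPolynomial V ℝ

namespace PMC

variable {St V : Type} [Fintype St]

/-- The transition matrix obtained by instantiating all parameters via `u`. -/
noncomputable def instantiate (D : PMC St V) (u : V → ℝ) : St → St → ℝ :=
  fun s s' => MvPolynomial.eval u (D.P s s')

/-- An instantiation is well-defined if it yields a Markov chain. -/
def WellDefined (D : PMC St V) (u : V → ℝ) : Prop :=
  (∀ s s', 0 ≤ D.instantiate u s s') ∧ ∀ s, ∑ s', D.instantiate u s s' = 1

/-- An instantiation is graph-preserving if every not-identically-zero transition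
polynomial is assigned a strictly positive probability. -/
def GraphPreserving (D : PMC St V) (u : V → ℝ) : Prop :=
  ∀ s s', D.P s s' ≠ 0 → 0 < D.instantiate u s s'

/-- An instantiation is ε-preserving if every not-identically-zero transition
polynomial is assigned probability at least ε. -/
def EpsPreserving (D : PMC St V) (ε : ℝ) (u : V → ℝ) : Prop :=
  ∀ s s', D.P s s' ≠ 0 → ε ≤ D.instantiate u s s'

/-- A transition-wise simple pMC: every transition polynomial is a rational
constant, a parameter `p`, or `1 - p`. -/
def SimpleTransition (D : PMC St V) : Prop :=
  ∀ s s', (∃ q : ℚ, D.P s s' = MvPolynomial.C (q : ℝ)) ∨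
    (∃ p, D.P s s' = MvPolynomial.X p) ∨
    (∃ p, D.P s s' = 1 - MvPolynomial.X p)

/-- A simple pMC: every state is either parameter-free (rational constant rows) or
has exactly two outgoing transitions labelled `p` and `1 - p` for one parameter. -/
def Simple (D : PMC St V) : Prop :=
  ∀ s, (∀ s', ∃ q : ℚ, D.P s s' = MvPolynomial.C (q : ℝ)) ∨
    (∃ p s₁ s₂, s₁ ≠ s₂ ∧ D.P s s₁ = MvPolynomial.X p ∧
      D.P s s₂ = 1 - MvPolynomial.X p ∧
      ∀ s', s' ≠ s₁ → s' ≠ s₂ → D.P s s' = 0)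

end PMC

/-- Parameters of the induced pMC: `p^{z,n}_a` (action probabilities) and
`q^{z,n}_{a,n'}` (memory update probabilities). -/
abbrev PVar (Act Z : Type) (k : ℕ) : Type :=
  (Z × Fin k × Act) ⊕ (Z × Fin k × Act × Fin k)

/-- Parameters of the substituted induced pMC: `r^{z,n}_{a,n'}`. -/
abbrev RVar (Act Z : Type) (k : ℕ) : Type := Z × Fin k × Act × Fin k

namespace POMDP

variable {S Act Z : Type} [Fintype S] [Fintype Act] [Fintype Z]

/-- Action probability term of the induced pMC: the remaining action receives
the leftover probability mass. -/
noncomputable def pTerm (M : POMDP S Act Z) (Remain : Z → Act) (k : ℕ)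
    (z : Z) (n : Fin k) (a : Act) : MvPolynomial (PVar Act Z k) ℝ :=
  if a = Remain z then
    1 - ∑ b ∈ Finset.univ.filter (fun b => M.enabledZ z b ∧ b ≠ Remain z),
          MvPolynomial.X (Sum.inl (z, n, b))
  else MvPolynomial.X (Sum.inl (z, n, a))

/-- Memory update term of the induced pMC: the last memory node receives
the leftover probability mass. -/
noncomputable def qTerm (k : ℕ) (hk : 0 < k)
    (z : Z) (n : Fin k) (a : Act) (n' : Fin k) : MvPolynomial (PVar Act Z k) ℝ :=
  if n' = (⟨k - 1, by omega⟩ : Fin k) then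
    1 - ∑ m ∈ Finset.univ.filter (fun m : Fin k => m ≠ (⟨k - 1, by omega⟩ : Fin k)),
          MvPolynomial.X (Sum.inr (z, n, a, m))
  else MvPolynomial.X (Sum.inr (z, n, a, n'))

/-- The pMC induced by a POMDP and a memory bound `k` (Definition "Induced pMC"). -/
noncomputable def inducedPMC (M : POMDP S Act Z) (Remain : Z → Act) (k : ℕ) (hk : 0 < k) :
    PMC (S × Fin k) (PVar Act Z k) where
  init := (M.init, ⟨0, hk⟩)
  P := fun p q => ∑ a,
    MvPolynomial.C (M.P p.1 a q.1) * M.pTerm Remain k (M.O p.1) p.2 a *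
      POMDP.qTerm k hk (M.O p.1) p.2 a q.2

/-- The set of parameters actually used by the induced pMC. -/
noncomputable def paramSet (M : POMDP S Act Z) (Remain : Z → Act) (k : ℕ) :
    Finset (PVar Act Z k) :=
  Finset.univ.filter (fun v => match v with
    | Sum.inl (z, _, a) => M.enabledZ z a ∧ a ≠ Remain z
    | Sum.inr (z, _, a, n') => M.enabledZ z a ∧ (n' : ℕ) ≠ k - 1)

/-- Joint (substituted) parameter term. -/
noncomputable def rTerm (M : POMDP S Act Z) (Remain : Z → Act) (k : ℕ) (hk : 0 < k)
    (z : Z) (n : Fin k) (a : Act) (n' : Fin k) : MvPolynomial (RVar Act Z k) ℝ :=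
  if a = Remain z ∧ n' = (⟨k - 1, by omega⟩ : Fin k) then
    1 - ∑ bm ∈ Finset.univ.filter (fun bm : Act × Fin k =>
          M.enabledZ z bm.1 ∧ ¬(bm.1 = Remain z ∧ bm.2 = (⟨k - 1, by omega⟩ : Fin k))),
          MvPolynomial.X (z, n, bm.1, bm.2)
  else MvPolynomial.X (z, n, a, n')

/-- The substituted induced pMC, with joint parameters `r^{z,n}_{a,n'}`. -/
noncomputable def inducedPMCsubs (M : POMDP S Act Z) (Remain : Z → Act) (k : ℕ) (hk : 0 < k) :
    PMC (S × Fin k) (RVar Act Z k) where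
  init := (M.init, ⟨0, hk⟩)
  P := fun p q => ∑ a,
    MvPolynomial.C (M.P p.1 a q.1) * M.rTerm Remain k hk (M.O p.1) p.2 a q.2

/-- The k-unfolding of a POMDP: memory nodes are stored in the state space. -/
noncomputable def unfold (M : POMDP S Act Z) (k : ℕ) (hk : 0 < k) :
    POMDP (S × Fin k) (Act × Fin k) (Z × Fin k) where
  init := (M.init, ⟨0, hk⟩)
  P := fun p a q => if q.2 = a.2 then M.P p.1 a.1 q.1 else 0
  O := fun p => (M.O p.1, p.2)

end POMDP

/-- n-step reach-avoid probability: reach `G` while avoiding `B` within `n` steps. -/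
noncomputable def reachAvoidN {St : Type} [Fintype St] (T : St → St → ℝ) (B G : Set St) :
    ℕ → St → ℝ
  | 0 => fun s => if s ∈ G then 1 else 0
  | n + 1 => fun s =>
      if s ∈ G then 1 else if s ∈ B then 0
      else ∑ s', T s s' * reachAvoidN T B G n s'

/-- Reach-avoid probability: probability of eventually reaching `G` while
avoiding `B`, as the supremum of the step-bounded probabilities. -/
noncomputable def reachAvoidProb {St : Type} [Fintype St] (T : St → St → ℝ)
    (B G : Set St) (s : St) : ℝ :=
  ⨆ n, reachAvoidN T B G n s

/-- A finite path: a start state and a list of action-state steps. -/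
structure FinPath (S Act : Type) : Type where
  start : S
  steps : List (Act × S)

namespace FinPath

variable {S Act Z : Type}

/-- The last state of a finite path. -/
def last (π : FinPath S Act) : S := (π.steps.map Prod.snd).getLastD π.start

/-- The observation sequence of a finite path. -/
def obsSeq (O : S → Z) (π : FinPath S Act) : Z × List (Act × Z) :=
  (O π.start, π.steps.map (fun p => (p.1, O p.2)))

end FinPath

namespace POMDP

variable {S Act Z : Type} [Fintype S] [Fintype Act] [Fintype Z]

def ValidFrom (M : POMDP S Act Z) : S → List (Act × S) → Prop
  | _, [] => True
  | s, (a, t) :: rest => M.P s a t ≠ 0 ∧ M.ValidFrom t rest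

/-- A valid finite path of (the underlying MDP of) a POMDP. -/
def ValidPath (M : POMDP S Act Z) (π : FinPath S Act) : Prop :=
  π.start = M.init ∧ M.ValidFrom π.start π.steps

end POMDP

/-- The distribution over memory nodes of an FSC after observing a finite path. -/
noncomputable def FSC.memDistr {S Act Z : Type} [Fintype Act] {k : ℕ}
    (A : FSC Act Z k) (O : S → Z) (π : FinPath S Act) : Fin k → ℝ :=
  (((π.start :: π.steps.map Prod.snd).map O).zip (π.steps.map Prod.fst)).foldl
    (fun ν za => fun n' => ∑ n, ν n * (A.δ n za.1 za.2).prob n')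
    (fun n => if n = A.init then 1 else 0)

/-- The (randomised, observation-based) strategy induced by an FSC. -/
noncomputable def FSC.strategy {S Act Z : Type} [Fintype Act] {k : ℕ}
    (A : FSC Act Z k) (O : S → Z) (π : FinPath S Act) : Act → ℝ :=
  fun a => ∑ n, A.memDistr O π n * (A.γ n (O π.last)).prob a

/-- A strategy (given as history-dependent action probabilities) is observation-based
if it agrees on paths with equal observation sequences. -/
def ObservationBased {S Act Z : Type} (O : S → Z)
    (σ : FinPath S Act → Act → ℝ) : Prop :=
  ∀ π π' : FinPath S Act, FinPath.obsSeq O π = FinPath.obsSeq O π' → σ π = σ π'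

/-- A strategy is non-zero if it assigns positive probability to every enabled
action after every valid history. -/
def NonZeroStrategy {S Act Z : Type} [Fintype S] [Fintype Act] [Fintype Z]
    (M : POMDP S Act Z) (σ : FinPath S Act → Act → ℝ) : Prop :=
  ∀ π : FinPath S Act, M.ValidPath π → ∀ a, M.enabled π.last a → 0 < σ π a

/-- A strategy is min-ε if it assigns probability at least ε to every enabled
action after every valid history. -/
def MinEpsStrategy {S Act Z : Type} [Fintype S] [Fintype Act] [Fintype Z]
    (M : POMDP S Act Z) (ε : ℝ) (σ : FinPath S Act → Act → ℝ) : Prop :=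
  ∀ π : FinPath S Act, M.ValidPath π → ∀ a, M.enabled π.last a → ε ≤ σ π a

/-- The set of MCs induced by POMDP `M` under `k`-FSCs equals the set of MCs
induced by the k-unfolding `M_k` under 1-FSCs (up to the canonical identification
`((s,n),0) ↦ (s,n)` of state spaces). -/
theorem inducedMC_unfolding_eq
    {S Act Z : Type} [Fintype S] [Fintype Act] [Fintype Z]
    (M : POMDP S Act Z) (hwf : M.WellFormed) (k : ℕ) (hk : 0 < k) :
    { T : (S × Fin k) → (S × Fin k) → ℝ | ∃ A : FSC Act Z k, M.inducedMC A = T } =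
      { T : (S × Fin k) → (S × Fin k) → ℝ |
        ∃ A' : FSC (Act × Fin k) (Z × Fin k) 1,
          (fun p q : S × Fin k =>
            (M.unfold k hk).inducedMC A'
              (p, (⟨0, Nat.one_pos⟩ : Fin 1)) (q, (⟨0, Nat.one_pos⟩ : Fin 1))) = T } := by
  ext T
  simp only [Set.mem_setOf_eq]
  constructor
  · rintro ⟨A, rfl⟩
    refine ⟨{ init := ⟨0, Nat.one_pos⟩
              γ := fun _ zn => ⟨fun an => (A.γ zn.2 zn.1).prob an.1 *
                    (A.δ zn.2 zn.1 an.1).prob an.2,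
                fun an => mul_nonneg ((A.γ zn.2 zn.1).nonneg _)
                  ((A.δ zn.2 zn.1 an.1).nonneg _), ?_⟩
              δ := fun _ _ _ => ⟨fun _ => 1, fun _ => zero_le_one, by simp⟩ }, ?_⟩
    · rw [Fintype.sum_prod_type]
      calc ∑ a, ∑ n', (A.γ zn.2 zn.1).prob a * (A.δ zn.2 zn.1 a).prob n'
          = ∑ a, (A.γ zn.2 zn.1).prob a * ∑ n', (A.δ zn.2 zn.1 a).prob n' := by
            simp [Finset.mul_sum]
        _ = 1 := by simp [Distr.sum_one]
    · funext p q
      simp only [POMDP.inducedMC, POMDP.unfold, Fintype.sum_prod_type]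
      refine Finset.sum_congr rfl fun a _ => ?_
      rw [Finset.sum_eq_single q.2 (fun b _ hb => by simp [Ne.symm hb]) (by simp)]
      simp [mul_assoc]
  · rintro ⟨A', rfl⟩
    set marg : Fin k → Z → Act → ℝ :=
      fun n z a => ∑ n', (A'.γ ⟨0, Nat.one_pos⟩ (z, n)).prob (a, n') with hmarg
    have margnn : ∀ n z a, 0 ≤ marg n z a := fun n z a =>
      Finset.sum_nonneg fun _ _ => (A'.γ _ _).nonneg _
    have hjoint0 : ∀ n z a, marg n z a = 0 → ∀ n',
        (A'.γ ⟨0, Nat.one_pos⟩ (z, n)).prob (a, n') = 0 := by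
      intro n z a h n'
      have := (Finset.sum_eq_zero_iff_of_nonneg
        (fun x _ => (A'.γ ⟨0, Nat.one_pos⟩ (z, n)).nonneg (a, x))).mp h
      exact this n' (Finset.mem_univ _)
    refine ⟨{ init := ⟨0, hk⟩
              γ := fun n z => ⟨marg n z, margnn n z, by
                rw [← Fintype.sum_prod_type]
                exact (A'.γ ⟨0, Nat.one_pos⟩ (z, n)).sum_one⟩
              δ := fun n z a =>
                if h : marg n z a = 0 then
                  ⟨fun n' => if n' = ⟨0, hk⟩ then 1 else 0,
                    fun n' => by split <;> norm_num, by simp⟩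
                else
                  ⟨fun n' => (A'.γ ⟨0, Nat.one_pos⟩ (z, n)).prob (a, n') / marg n z a,
                    fun n' => div_nonneg ((A'.γ _ _).nonneg _) (margnn n z a),
                    by rw [← Finset.sum_div, div_eq_one_iff_eq h]⟩ }, ?_⟩
    funext p q
    simp only [POMDP.inducedMC, POMDP.unfold, Fintype.sum_prod_type]
    have hd1 : ∀ zn an, (A'.δ ⟨0, Nat.one_pos⟩ zn an).prob ⟨0, Nat.one_pos⟩ = 1 := by
      intro zn an
      have := (A'.δ ⟨0, Nat.one_pos⟩ zn an).sum_one
      simpa [Fin.sum_univ_one] using this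
    refine Finset.sum_congr rfl fun a _ => ?_
    simp only [ite_mul, zero_mul, Finset.sum_ite_eq, Finset.mem_univ, if_pos, hd1, mul_one]
    split
    · rename_i h
      rw [hjoint0 p.2 (M.O p.1) a h q.2, h]
      ring
    · rename_i h
      field_simp
end

section
/- Let M be a POMDP, k a memory bound, and φ = P_{>λ}(¬B U G) a reach-avoid specification. Then either no k-FSC A satisfies M^{σ_A} ⊨ φ, or there exists a k-FSC A' with M^{σ_{A'}} ⊨ φ whose strategy σ_{A'} is non-zero (assigns positive probability to every enabled action after every history). -/
open scoped BigOperators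

attribute [local instance] Classical.propDecidable

section Aux

/-- Clamp a real to `[0,1]`. -/
noncomputable def clamp01 (ε : ℝ) : ℝ := max 0 (min ε 1)

lemma clamp01_nonneg (ε : ℝ) : 0 ≤ clamp01 ε := le_max_left _ _

lemma clamp01_le_one (ε : ℝ) : clamp01 ε ≤ 1 := max_le zero_le_one (min_le_right _ _)

lemma clamp01_continuous : Continuous clamp01 :=
  continuous_const.max (continuous_id.min continuous_const)

lemma clamp01_zero : clamp01 0 = 0 := by simp [clamp01]

lemma clamp01_pos {ε : ℝ} (h : 0 < ε) : 0 < clamp01 ε :=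
  lt_max_of_lt_right (lt_min h one_pos)

/-- Mix a distribution with the uniform distribution, with weight `clamp01 ε`. -/
noncomputable def Distr.mix {X : Type} [Fintype X] [Nonempty X] (d : Distr X) (ε : ℝ) :
    Distr X where
  prob x := (1 - clamp01 ε) * d.prob x + clamp01 ε / Fintype.card X
  nonneg x := add_nonneg
    (mul_nonneg (by linarith [clamp01_le_one ε]) (d.nonneg x))
    (div_nonneg (clamp01_nonneg ε) (Nat.cast_nonneg _))
  sum_one := by
    have hc : (Fintype.card X : ℝ) ≠ 0 := Nat.cast_ne_zero.mpr Fintype.card_ne_zero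
    rw [Finset.sum_add_distrib, ← Finset.mul_sum, d.sum_one, Finset.sum_const,
      Finset.card_univ, nsmul_eq_mul]
    field_simp
    ring

lemma Distr.mix_prob_pos {X : Type} [Fintype X] [Nonempty X] (d : Distr X) {ε : ℝ}
    (hε : 0 < ε) (x : X) : 0 < (d.mix ε).prob x := by
  have hcard : (0:ℝ) < Fintype.card X := by
    exact_mod_cast Fintype.card_pos
  exact add_pos_of_nonneg_of_pos
    (mul_nonneg (by linarith [clamp01_le_one ε]) (d.nonneg x))
    (div_pos (clamp01_pos hε) hcard)

/-- Perturb all action distributions of an FSC towards uniform. -/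
noncomputable def FSC.mixγ {Act Z : Type} [Fintype Act] [Nonempty Act] {k : ℕ}
    (A : FSC Act Z k) (ε : ℝ) : FSC Act Z k :=
  ⟨A.init, fun n z => (A.γ n z).mix ε, A.δ⟩

lemma inducedMC_mixγ_zero {S Act Z : Type} [Fintype S] [Fintype Act] [Fintype Z]
    [Nonempty Act] (M : POMDP S Act Z) {k : ℕ} (A : FSC Act Z k) :
    M.inducedMC (A.mixγ 0) = M.inducedMC A := by
  funext p q
  simp [POMDP.inducedMC, FSC.mixγ, Distr.mix, clamp01_zero]

lemma reachAvoidN_nonneg {St : Type} [Fintype St] (T : St → St → ℝ)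
    (hT0 : ∀ s s', 0 ≤ T s s') (B G : Set St) :
    ∀ n s, 0 ≤ reachAvoidN T B G n s := by
  intro n
  induction n with
  | zero =>
    intro s; simp only [reachAvoidN]; split_ifs <;> norm_num
  | succ n ih =>
    intro s
    simp only [reachAvoidN]
    split_ifs with h1 h2
    · norm_num
    · norm_num
    · exact Finset.sum_nonneg fun s' _ => mul_nonneg (hT0 s s') (ih s')

lemma reachAvoidN_le_one {St : Type} [Fintype St] (T : St → St → ℝ)
    (hT0 : ∀ s s', 0 ≤ T s s') (hT1 : ∀ s, ∑ s', T s s' ≤ 1) (B G : Set St) :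
    ∀ n s, reachAvoidN T B G n s ≤ 1 := by
  intro n
  induction n with
  | zero =>
    intro s; simp only [reachAvoidN]; split_ifs <;> norm_num
  | succ n ih =>
    intro s
    simp only [reachAvoidN]
    split_ifs with h1 h2
    · norm_num
    · norm_num
    · calc ∑ s', T s s' * reachAvoidN T B G n s'
          ≤ ∑ s', T s s' * 1 :=
            Finset.sum_le_sum fun s' _ => mul_le_mul_of_nonneg_left (ih s') (hT0 s s')
        _ ≤ 1 := by simpa using hT1 s

lemma reachAvoidN_continuous {St : Type} [Fintype St] (T : ℝ → St → St → ℝ)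
    (hT : ∀ s s', Continuous fun ε => T ε s s') (B G : Set St) :
    ∀ n s, Continuous fun ε => reachAvoidN (T ε) B G n s := by
  intro n
  induction n with
  | zero =>
    intro s; simp only [reachAvoidN]; exact continuous_const
  | succ n ih =>
    intro s
    simp only [reachAvoidN]
    split_ifs with h1 h2
    · exact continuous_const
    · exact continuous_const
    · exact continuous_finset_sum _ fun s' _ => (hT s s').mul (ih s')

lemma inducedMC_nonneg {S Act Z : Type} [Fintype S] [Fintype Act] [Fintype Z]
    (M : POMDP S Act Z) (hwf : M.WellFormed) {k : ℕ} (A : FSC Act Z k)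
    (p q : S × Fin k) : 0 ≤ M.inducedMC A p q :=
  Finset.sum_nonneg fun a _ => mul_nonneg
    (mul_nonneg (hwf.1 _ _ _) ((A.γ p.2 (M.O p.1)).nonneg a))
    ((A.δ p.2 (M.O p.1) a).nonneg q.2)

lemma rowsum_le_one {S Act Z : Type} [Fintype S] [Fintype Act] [Fintype Z]
    (M : POMDP S Act Z) (hwf : M.WellFormed) (s : S) (a : Act) :
    ∑ s', M.P s a s' ≤ 1 := by
  by_cases h : M.enabled s a
  · exact (hwf.2.1 s a h).le
  · have : ∀ s', M.P s a s' = 0 := by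
      intro s'
      by_contra hne
      exact h ⟨s', hne⟩
    simp [this]

lemma inducedMC_rowsum_le_one {S Act Z : Type} [Fintype S] [Fintype Act] [Fintype Z]
    (M : POMDP S Act Z) (hwf : M.WellFormed) {k : ℕ} (A : FSC Act Z k)
    (p : S × Fin k) : ∑ q, M.inducedMC A p q ≤ 1 := by
  set γp := A.γ p.2 (M.O p.1) with hγp
  have key : ∑ q, M.inducedMC A p q
      = ∑ a, (∑ s', M.P p.1 a s') * γp.prob a := by
    calc ∑ q, M.inducedMC A p q
        = ∑ a, ∑ q : S × Fin k, M.P p.1 a q.1 * γp.prob a *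
            (A.δ p.2 (M.O p.1) a).prob q.2 := by
          simp only [POMDP.inducedMC, ← hγp]
          exact Finset.sum_comm
      _ = ∑ a, (∑ s', M.P p.1 a s') * γp.prob a := by
          refine Finset.sum_congr rfl fun a _ => ?_
          rw [Fintype.sum_prod_type]
          have h1 : ∀ s', ∑ n', M.P p.1 a s' * γp.prob a *
              (A.δ p.2 (M.O p.1) a).prob n' = M.P p.1 a s' * γp.prob a := by
            intro s'
            rw [← Finset.mul_sum, (A.δ p.2 (M.O p.1) a).sum_one, mul_one]
          simp only [h1]
          rw [← Finset.sum_mul]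
  rw [key]
  calc ∑ a, (∑ s', M.P p.1 a s') * γp.prob a
      ≤ ∑ a, 1 * γp.prob a :=
        Finset.sum_le_sum fun a _ =>
          mul_le_mul_of_nonneg_right (rowsum_le_one M hwf p.1 a) (γp.nonneg a)
    _ = 1 := by simp [γp.sum_one]

/-- The fold used in `FSC.memDistr` preserves being a subprobability vector
summing to one. -/
lemma foldl_distr_inv {Z Act : Type} [Fintype Act] {k : ℕ}
    (δ : Fin k → Z → Act → Distr (Fin k)) (L : List (Z × Act)) :
    ∀ ν : Fin k → ℝ, (∀ n, 0 ≤ ν n) → (∑ n, ν n) = 1 →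
      (∀ n', 0 ≤ L.foldl
        (fun ν za => fun n' => ∑ n, ν n * (δ n za.1 za.2).prob n') ν n') ∧
      (∑ n', L.foldl
        (fun ν za => fun n' => ∑ n, ν n * (δ n za.1 za.2).prob n') ν n') = 1 := by
  induction L with
  | nil => intro ν h0 h1; exact ⟨h0, h1⟩
  | cons za L ih =>
    intro ν h0 h1
    simp only [List.foldl_cons]
    apply ih
    · intro n'
      exact Finset.sum_nonneg fun n _ => mul_nonneg (h0 n) ((δ n za.1 za.2).nonneg n')
    · rw [Finset.sum_comm]
      have h2 : ∀ n, ∑ n', ν n * (δ n za.1 za.2).prob n' = ν n := by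
        intro n
        rw [← Finset.mul_sum, (δ n za.1 za.2).sum_one, mul_one]
      simp only [h2]
      exact h1

lemma memDistr_nonneg_sum {S Act Z : Type} [Fintype Act] {k : ℕ}
    (A : FSC Act Z k) (O : S → Z) (π : FinPath S Act) :
    (∀ n, 0 ≤ A.memDistr O π n) ∧ (∑ n, A.memDistr O π n) = 1 := by
  unfold FSC.memDistr
  apply foldl_distr_inv
  · intro n; split_ifs <;> norm_num
  · simp

end Aux

/-- For a POMDP `M`, memory bound `k` and reach-avoid specification
`φ = P_{>λ}(¬B U G)`: either no `k`-FSC satisfies `φ`, or some `k`-FSC satisfies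
`φ` with a non-zero induced strategy. -/
theorem nonzero_strategy_suffices
    {S Act Z : Type} [Fintype S] [Fintype Act] [Fintype Z]
    (M : POMDP S Act Z) (hwf : M.WellFormed) (k : ℕ) (hk : 0 < k)
    (B G : Set S) (lam : ℝ) (hlam0 : 0 ≤ lam) (hlam1 : lam < 1) :
    (∀ A : FSC Act Z k,
        ¬ reachAvoidProb (M.inducedMC A)
            {p : S × Fin k | p.1 ∈ B} {p : S × Fin k | p.1 ∈ G}
            (M.init, A.init) > lam) ∨
    (∃ A : FSC Act Z k,
        reachAvoidProb (M.inducedMC A)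
            {p : S × Fin k | p.1 ∈ B} {p : S × Fin k | p.1 ∈ G}
            (M.init, A.init) > lam ∧
        NonZeroStrategy M (A.strategy M.O)) := by
  set Bk : Set (S × Fin k) := {p : S × Fin k | p.1 ∈ B}
  set Gk : Set (S × Fin k) := {p : S × Fin k | p.1 ∈ G}
  by_cases hex : ∃ A : FSC Act Z k,
      reachAvoidProb (M.inducedMC A) Bk Gk (M.init, A.init) > lam
  swap
  · left
    push_neg at hex
    intro A
    exact not_lt_of_ge (hex A)
  right
  obtain ⟨A, hA⟩ := hex
  haveI : Nonempty Act := ⟨(hwf.2.2.1 M.init).choose⟩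
  -- there is a finite horizon already exceeding lam
  have hN : ∃ N, lam < reachAvoidN (M.inducedMC A) Bk Gk N (M.init, A.init) := by
    by_contra h
    push_neg at h
    have : reachAvoidProb (M.inducedMC A) Bk Gk (M.init, A.init) ≤ lam :=
      ciSup_le h
    exact absurd hA (not_lt_of_ge this)
  obtain ⟨N, hN⟩ := hN
  -- continuity of the perturbed finite-horizon value in ε
  set g : ℝ → ℝ := fun ε =>
    reachAvoidN (M.inducedMC (A.mixγ ε)) Bk Gk N (M.init, A.init) with hg
  have hgcont : Continuous g := by
    apply reachAvoidN_continuous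
    intro p q
    apply continuous_finset_sum
    intro a _
    simp only [FSC.mixγ, Distr.mix]
    exact (continuous_const.mul
      (((continuous_const.sub clamp01_continuous).mul continuous_const).add
        (clamp01_continuous.div_const _))).mul continuous_const
  have hg0 : lam < g 0 := by
    rw [hg]
    simp only [inducedMC_mixγ_zero M A]
    exact hN
  -- find a positive ε retaining the bound
  have hopen : IsOpen {x : ℝ | lam < g x} := isOpen_lt continuous_const hgcont
  obtain ⟨d, hd, hball⟩ := Metric.isOpen_iff.mp hopen 0 hg0
  set ε : ℝ := d / 2 with hε
  have hεpos : 0 < ε := by positivity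
  have hgε : lam < g ε := by
    apply hball
    rw [Metric.mem_ball, Real.dist_eq]
    rw [abs_of_pos (by linarith)]
    simp only [hε]
    linarith
  refine ⟨A.mixγ ε, ?_, ?_⟩
  · -- the reach-avoid probability still exceeds lam
    have hbdd : BddAbove (Set.range fun n =>
        reachAvoidN (M.inducedMC (A.mixγ ε)) Bk Gk n (M.init, (A.mixγ ε).init)) := by
      refine ⟨1, ?_⟩
      rintro x ⟨n, rfl⟩
      exact reachAvoidN_le_one _ (inducedMC_nonneg M hwf _)
        (inducedMC_rowsum_le_one M hwf _) _ _ n _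
    have hle : g ε ≤ reachAvoidProb (M.inducedMC (A.mixγ ε)) Bk Gk
        (M.init, (A.mixγ ε).init) := by
      have : (A.mixγ ε).init = A.init := rfl
      rw [reachAvoidProb, this]
      exact le_ciSup hbdd N
    exact lt_of_lt_of_le hgε hle
  · -- the induced strategy is non-zero (indeed everywhere positive)
    intro π _ a _
    obtain ⟨hnn, hsum⟩ := memDistr_nonneg_sum (A.mixγ ε) M.O π
    have hexn : ∃ n₀, 0 < (A.mixγ ε).memDistr M.O π n₀ := by
      by_contra h
      push_neg at h
      have hz : ∑ n, (A.mixγ ε).memDistr M.O π n = 0 :=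
        Finset.sum_eq_zero fun n _ => le_antisymm (h n) (hnn n)
      rw [hz] at hsum
      norm_num at hsum
    obtain ⟨n₀, hn₀⟩ := hexn
    have hγpos : ∀ n, 0 < ((A.mixγ ε).γ n (M.O π.last)).prob a := by
      intro n
      exact Distr.mix_prob_pos _ hεpos a
    unfold FSC.strategy
    apply Finset.sum_pos'
    · intro n _
      exact mul_nonneg (hnn n) (hγpos n).le
    · exact ⟨n₀, Finset.mem_univ _, mul_pos hn₀ (hγpos n₀)⟩
end
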